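/- Let dp(P_n, 2) denote the number of partitions of the vertex set of the path P_n into exactly 2 dominating sets. Then dp(P_2,2) = dp(P_3,2) = 1 and for all n ≥ 4, dp(P_n,2) = dp(P_{n-1},2) + dp(P_{n-2},2); consequently dp(P_{n+1},2)/dp(P_n,2) → φ as n → ∞, where φ = (1+√5)/2. -/

import Mathlib

open SimpleGraph Filter

noncomputable def phi : ℝ := (1 + Real.sqrt 5) / 2

/-- `S` is a dominating set of `G`. -/
def IsDominatingSet {V : Type*} (G : SimpleGraph V) (S : Set V) : Prop :=
  ∀ v ∉ S, ∃ u ∈ S, G.Adj u v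

/-- `dp2 n` is the number of (unordered) partitions of the vertex set of the path
`Pₙ` into exactly two dominating sets: sets `A` with both `A` and `Aᶜ` dominating,
counted up to swapping `A` and `Aᶜ`. -/
noncomputable def dp2 (n : ℕ) : ℕ :=
  Nat.card {A : Set (Fin n) //
    IsDominatingSet (pathGraph n) A ∧ IsDominatingSet (pathGraph n) Aᶜ} / 2

/-!
A partition `{A, Aᶜ}` into two dominating sets is the same as a weak 2-coloring, counted up to
swapping the colors. On a path the last vertex must get the color opposite to its predecessor, so
a weak coloring of `P (n + 2)` is determined by its restriction to `P (n + 1)`, a coloring that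
is weak at every vertex except possibly the last. Such a coloring is either weak, or its last two
vertices share a color and removing the last vertex leaves a weak coloring of `P n`. Hence the
numbers `w n` of weak colorings satisfy `w (n + 3) = w (n + 2) + w (n + 1)` with `w 1 = 0` and
`w 2 = 2`, so `w (n + 1) = 2 * fib n` and `dp2 (n + 1) = fib n`.
-/

theorem Nat.card_subtype_eq_card_and_add_card_and_not {α : Type*} [Finite α] (P Q : α → Prop) :
    Nat.card {x // P x} = Nat.card {x // P x ∧ Q x} + Nat.card {x // P x ∧ ¬Q x} := by
  classical
  rw [← Nat.card_congr (Equiv.sumCompl fun x : {x // P x} => Q x), Nat.card_sum,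
    Nat.card_congr (Equiv.subtypeSubtypeEquivSubtypeInter P Q),
    Nat.card_congr (Equiv.subtypeSubtypeEquivSubtypeInter P (¬Q ·))]

theorem Fin.card_subtype_snoc_eq {α : Type*} {n : ℕ} {P : (Fin (n + 1) → α) → Prop}
    {Q : (Fin n → α) → Prop} (φ : (Fin n → α) → α)
    (h : ∀ g b, P (Fin.snoc g b) ↔ Q g ∧ b = φ g) :
    Nat.card {f // P f} = Nat.card {g // Q g} :=
  Nat.card_congr
    { toFun f := ⟨Fin.init f.1, ((h _ _).1 ((Fin.snoc_init_self f.1).symm ▸ f.2)).1⟩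
      invFun g := ⟨Fin.snoc g.1 (φ g.1), (h _ _).2 ⟨g.2, rfl⟩⟩
      left_inv f := by
        have hlast := ((h _ _).1 ((Fin.snoc_init_self f.1).symm ▸ f.2)).2
        ext1
        simp only [← hlast, Fin.snoc_init_self]
      right_inv g := by simp [Fin.init_snoc] }

namespace SimpleGraph

section

variable {V : Type*} (G : SimpleGraph V)

def IsWeakColoringAt (f : V → Bool) (v : V) : Prop :=
  ∃ u, G.Adj u v ∧ f u ≠ f v

def IsWeakColoring (f : V → Bool) : Prop :=
  ∀ v, G.IsWeakColoringAt f v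

theorem isWeakColoring_iff_isDominatingSet (f : V → Bool) :
    G.IsWeakColoring f ↔
      IsDominatingSet G {v | f v = true} ∧ IsDominatingSet G {v | f v = true}ᶜ := by
  constructor
  · intro hf
    refine ⟨fun v hv => ?_, fun v hv => ?_⟩ <;> obtain ⟨u, huv, hfu⟩ := hf v
    · exact ⟨u, by simp_all, huv⟩
    · exact ⟨u, by simp_all, huv⟩
  · rintro ⟨hA, hAc⟩ v
    by_cases hv : f v = true
    · obtain ⟨u, hu, huv⟩ := hAc v (by simpa using hv)
      exact ⟨u, huv, by simp_all⟩
    · obtain ⟨u, hu, huv⟩ := hA v hv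
      exact ⟨u, huv, by simp_all⟩

theorem card_isDominatingSet_and_compl_eq_card_isWeakColoring :
    Nat.card {A : Set V // IsDominatingSet G A ∧ IsDominatingSet G Aᶜ} =
      Nat.card {f : V → Bool // G.IsWeakColoring f} := by
  classical
  let e : (V → Bool) ≃ Set V :=
    ⟨fun f => {v | f v = true}, fun A v => decide (v ∈ A), fun f => by ext; simp,
      fun A => by ext; simp⟩
  exact (Nat.card_congr (e.subtypeEquiv (G.isWeakColoring_iff_isDominatingSet ·))).symm

end

theorem pathGraph_adj_castSucc {n : ℕ} {i j : Fin n} :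
    (pathGraph (n + 1)).Adj i.castSucc j.castSucc ↔ (pathGraph n).Adj i j := by
  simp only [pathGraph_adj, Fin.val_castSucc]

theorem pathGraph_adj_castSucc_last {n : ℕ} {i : Fin (n + 1)} :
    (pathGraph (n + 2)).Adj i.castSucc (Fin.last (n + 1)) ↔ i = Fin.last n := by
  simp only [pathGraph_adj, Fin.val_castSucc, Fin.val_last, Fin.ext_iff]
  omega

theorem isWeakColoringAt_snoc_last {n : ℕ} (g : Fin (n + 1) → Bool) (b : Bool) :
    (pathGraph (n + 2)).IsWeakColoringAt (Fin.snoc g b) (Fin.last (n + 1)) ↔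
      b ≠ g (Fin.last n) := by
  rw [IsWeakColoringAt, Fin.exists_fin_succ']
  simp only [pathGraph_adj_castSucc_last, (pathGraph _).irrefl, false_and, or_false,
    exists_eq_left, Fin.snoc_castSucc, Fin.snoc_last, ne_comm]

theorem isWeakColoringAt_snoc_castSucc {n : ℕ} (g : Fin (n + 1) → Bool) (b : Bool)
    (i : Fin (n + 1)) :
    (pathGraph (n + 2)).IsWeakColoringAt (Fin.snoc g b) i.castSucc ↔
      (pathGraph (n + 1)).IsWeakColoringAt g i ∨ (i = Fin.last n ∧ b ≠ g i) := by
  simp only [IsWeakColoringAt, Fin.exists_fin_succ', pathGraph_adj_castSucc,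
    (pathGraph _).adj_comm (Fin.last _), pathGraph_adj_castSucc_last, Fin.snoc_castSucc,
    Fin.snoc_last]

def IsWeakColoringExceptLast {n : ℕ} (g : Fin (n + 1) → Bool) : Prop :=
  ∀ i : Fin n, (pathGraph (n + 1)).IsWeakColoringAt g i.castSucc

theorem isWeakColoring_pathGraph_iff {n : ℕ} (g : Fin (n + 1) → Bool) :
    (pathGraph (n + 1)).IsWeakColoring g ↔
      IsWeakColoringExceptLast g ∧ (pathGraph (n + 1)).IsWeakColoringAt g (Fin.last n) :=
  Fin.forall_fin_succ'

theorem isWeakColoringExceptLast_snoc_iff {n : ℕ} (g : Fin (n + 1) → Bool) (b : Bool) :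
    IsWeakColoringExceptLast (Fin.snoc g b : Fin (n + 2) → Bool) ↔
      IsWeakColoringExceptLast g ∧
        ((pathGraph (n + 1)).IsWeakColoringAt g (Fin.last n) ∨ b ≠ g (Fin.last n)) := by
  simp only [IsWeakColoringExceptLast, isWeakColoringAt_snoc_castSucc, Fin.forall_fin_succ',
    Fin.castSucc_ne_last, false_and, or_false, true_and]

theorem isWeakColoring_snoc_iff {n : ℕ} (g : Fin (n + 1) → Bool) (b : Bool) :
    (pathGraph (n + 2)).IsWeakColoring (Fin.snoc g b) ↔
      IsWeakColoringExceptLast g ∧ b = !g (Fin.last n) := by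
  rw [isWeakColoring_pathGraph_iff, isWeakColoringExceptLast_snoc_iff,
    isWeakColoringAt_snoc_last, ← Bool.eq_not]
  tauto

theorem card_isWeakColoring_pathGraph_add_two (n : ℕ) :
    Nat.card {f // (pathGraph (n + 2)).IsWeakColoring f} =
      Nat.card {g : Fin (n + 1) → Bool // IsWeakColoringExceptLast g} :=
  Fin.card_subtype_snoc_eq (fun g => !g (Fin.last n)) isWeakColoring_snoc_iff

theorem card_isWeakColoringExceptLast_add_two (n : ℕ) :
    Nat.card {g : Fin (n + 2) → Bool // IsWeakColoringExceptLast g} =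
      Nat.card {f // (pathGraph (n + 2)).IsWeakColoring f} +
        Nat.card {f // (pathGraph (n + 1)).IsWeakColoring f} := by
  rw [Nat.card_subtype_eq_card_and_add_card_and_not _
    ((pathGraph (n + 2)).IsWeakColoringAt · (Fin.last (n + 1)))]
  congr 1
  · simp only [← isWeakColoring_pathGraph_iff]
  · refine Fin.card_subtype_snoc_eq (fun g => g (Fin.last n)) fun g b => ?_
    rw [isWeakColoringExceptLast_snoc_iff, isWeakColoringAt_snoc_last,
      isWeakColoring_pathGraph_iff]
    tauto

theorem card_isWeakColoring_pathGraph (n : ℕ) :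
    Nat.card {f // (pathGraph (n + 1)).IsWeakColoring f} = 2 * Nat.fib n := by
  induction n using Nat.twoStepInduction with
  | zero =>
    have : IsEmpty {f // (pathGraph 1).IsWeakColoring f} :=
      ⟨fun ⟨_, hf⟩ => by
        obtain ⟨u, hu, -⟩ := hf 0
        exact (pathGraph 1).irrefl (Subsingleton.elim u 0 ▸ hu)⟩
    simp
  | one => simp [card_isWeakColoring_pathGraph_add_two, IsWeakColoringExceptLast]
  | more n ih₁ ih₂ =>
    rw [card_isWeakColoring_pathGraph_add_two, card_isWeakColoringExceptLast_add_two, ih₁, ih₂,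
      Nat.fib_add_two]
    ring

end SimpleGraph

theorem dp2_add_one (n : ℕ) : dp2 (n + 1) = Nat.fib n := by
  rw [dp2, card_isDominatingSet_and_compl_eq_card_isWeakColoring, card_isWeakColoring_pathGraph,
    Nat.mul_div_cancel_left _ two_pos]

theorem dp2_pathGraph :
    dp2 2 = 1 ∧ dp2 3 = 1 ∧
      (∀ n, 4 ≤ n → dp2 n = dp2 (n - 1) + dp2 (n - 2)) ∧
      Tendsto (fun n => (dp2 (n + 1) : ℝ) / (dp2 n : ℝ)) atTop (nhds phi) := by
  refine ⟨dp2_add_one 1, dp2_add_one 2, fun n hn => ?_, ?_⟩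
  · obtain ⟨m, rfl⟩ := Nat.exists_eq_add_of_le' hn
    rw [show m + 4 - 1 = m + 2 + 1 by omega, show m + 4 - 2 = m + 1 + 1 by omega, dp2_add_one,
      dp2_add_one, dp2_add_one, Nat.fib_add_two, add_comm]
  · rw [← tendsto_add_atTop_iff_nat 1]
    simp only [dp2_add_one]
    exact tendsto_fib_succ_div_fib_atTop
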